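/- In the polynomial ring ℂ[p₂,r,t], for each i = 0, 1, 2, there is a polynomial gᵢ such that uᵢ(1, −1, −1 + p₂·r·t, p₂·t, 0, 1 + (1 − p₂·r − p₂)·t) = t·p₂·(λᵢ + t·gᵢ), where λ = (λ₀, λ₁, λ₂) = (2, −r, r − 2). Moreover λ₀ + λ₁ + λ₂ = 0, i.e., the limiting line λ passes through P = τ(1) = (1,1,1), and for r ≠ r′ the vectors (2, −r, r−2) and (2, −r′, r′−2) are linearly independent over ℂ. (This is the (2,2,2) case for the symbol pattern [x y y; x z z]: after the two blow-ups, the Pascal morphism sends the exceptional fibre injectively into the pencil of lines through P.) -/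
import Mathlib


open MvPolynomial

namespace Pascal222Pencil

noncomputable section

/-- The coordinates `(u₀, u₁, u₂)` of the Pascal line of the array
`[τ a, τ b, τ c; τ f, τ e, τ d]`, over any commutative ring. -/
def u {R : Type*} [CommRing R] (a b c d e f : R) : Fin 3 → R :=
  ![a*b*d*e - a*b*d*f - a*c*d*e + a*c*e*f + b*c*d*f - b*c*e*f,
    -(a*b*e) + a*b*f + a*c*d - a*c*f + a*d*f - a*e*f - b*c*d + b*c*e - b*d*e + b*e*f + c*d*e - c*d*f,
    -(a*d) + a*e + b*d - b*f - c*e + c*f]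

/-- The variables `p₂, r, t` of the polynomial ring `ℂ[p₂,r,t]`. -/
def p2 : MvPolynomial (Fin 3) ℂ := X 0
def r : MvPolynomial (Fin 3) ℂ := X 1
def t : MvPolynomial (Fin 3) ℂ := X 2

/-- The limiting line `λ = (2, -r, r-2)` as polynomials in `ℂ[p₂,r,t]`. -/
def lam : Fin 3 → MvPolynomial (Fin 3) ℂ := ![2, -r, r - 2]

/-- The `(2,2,2)` case, symbol pattern `[x y y; x z z]`: after the two blow-ups
(chart `f = 1 + (1 - p₂r - p₂)t`, `e = p₂t`, `d = -1 + p₂rt`), each `uᵢ` factors as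
`t·p₂·(λᵢ + t·gᵢ)` with `λ = (2, -r, r-2)`.  Moreover `λ₀ + λ₁ + λ₂ = 0`, so the
limiting line passes through `P = τ 1 = (1,1,1)`, and distinct values of `r` give
projectively distinct lines: the Pascal morphism sends the exceptional fibre
injectively into the pencil of lines through `P`. -/
theorem pascal_222_pencil :
    (∀ i : Fin 3, ∃ g : MvPolynomial (Fin 3) ℂ,
      u 1 (-1) (-1 + p2 * r * t) (p2 * t) 0 (1 + (1 - p2 * r - p2) * t) i
        = t * p2 * (lam i + t * g)) ∧
    lam 0 + lam 1 + lam 2 = 0 ∧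
    (∀ s s' : ℂ, s ≠ s' →
      LinearIndependent ℂ ![(![(2 : ℂ), -s, s - 2]), (![(2 : ℂ), -s', s' - 2])]) := by
  have hu0 : ∀ a b c d e f : MvPolynomial (Fin 3) ℂ,
      u a b c d e f 0 = a*b*d*e - a*b*d*f - a*c*d*e + a*c*e*f + b*c*d*f - b*c*e*f :=
    fun _ _ _ _ _ _ => rfl
  have hu1 : ∀ a b c d e f : MvPolynomial (Fin 3) ℂ,
      u a b c d e f 1 = -(a*b*e) + a*b*f + a*c*d - a*c*f + a*d*f - a*e*f - b*c*d + b*c*e - b*d*e + b*e*f + c*d*e - c*d*f :=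
    fun _ _ _ _ _ _ => rfl
  have hu2 : ∀ a b c d e f : MvPolynomial (Fin 3) ℂ,
      u a b c d e f 2 = -(a*d) + a*e + b*d - b*f - c*e + c*f :=
    fun _ _ _ _ _ _ => rfl
  have hl0 : lam 0 = 2 := rfl
  have hl1 : lam 1 = -r := rfl
  have hl2 : lam 2 = r - 2 := rfl
  refine ⟨?_, ?_, ?_⟩
  · intro i
    match i with
    | 0 => exact ⟨2 - 2*p2 - 3*p2*r - p2*r*t + p2^2*r*t + p2^2*r^2*t, by
        rw [hu0, hl0]; ring⟩
    | 1 => exact ⟨2 - r - 2*p2 - p2*r*t + p2*r^2 + p2^2*r*t + p2^2*r^2*t, by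
        rw [hu1, hl1]; ring⟩
    | 2 => exact ⟨r - p2*r - p2*r^2, by
        rw [hu2, hl2]; ring⟩
  · rw [hl0, hl1, hl2]; ring
  · intro s s' hss
    rw [LinearIndependent.pair_iff]
    intro x y h
    have h0 := congrFun h 0
    have h1 := congrFun h 1
    simp only [Pi.add_apply, Pi.smul_apply, smul_eq_mul, Pi.zero_apply,
      Matrix.cons_val_zero, Matrix.cons_val_one, Matrix.head_cons] at h0 h1
    have hd : s' - s ≠ 0 := sub_ne_zero.mpr (Ne.symm hss)
    have hx : x = 0 := by
      have : (s' - s) * x = 0 := by linear_combination h1 + s'/2 * h0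
      exact (mul_eq_zero.mp this).resolve_left hd
    have hy : y = 0 := by linear_combination h0/2 - hx
    exact ⟨hx, hy⟩

end

end Pascal222Pencil
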